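/- arXiv:1808.02326 — 5 statements merged into one kernel-verified Lean document; each statement's English description precedes it below -/
import Mathlib

section
/- Let d ≥ 3 be an integer and let 0 < a₁ < a₂. Then there exist positive constants C₀ and α, depending only on d, a₁ and a₂, such that for every nonnegative measurable function b on ℝ^d, every t > 0 and all x, y ∈ ℝ^d, one has ∫₀ᵗ ∫_{ℝ^d} G_{a₁}(t−s, x, z) · b(z) · s^{−1/2} · G_{a₂}(s, z, y) dz ds ≤ C₀ · N_t^α(b) · G_{a₁}(t, x, y). -/
open MeasureTheory Real Set
open scoped ENNReal

/-- The Gaussian kernel `G_a(s,x,y) = s^{-d/2} exp(-a |x-y|^2 / (2s))`. -/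
noncomputable def gaussG (d : ℕ) (a s : ℝ) (x y : EuclideanSpace ℝ (Fin d)) : ℝ :=
  s ^ (-(d : ℝ) / 2) * Real.exp (-a * ‖x - y‖ ^ 2 / (2 * s))

/-- The Kato-type quantity `N_t^α(b) = sup_x ∫_0^t ∫ s^{-(d+1)/2} exp(-α|x-y|^2/s) b(y) dy ds`. -/
noncomputable def katoN (d : ℕ) (α t : ℝ) (b : EuclideanSpace ℝ (Fin d) → ℝ) : ℝ≥0∞ :=
  ⨆ x : EuclideanSpace ℝ (Fin d), ∫⁻ s in Set.Ioc (0 : ℝ) t,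
    ∫⁻ y, ENNReal.ofReal (s ^ (-((d : ℝ) + 1) / 2) * Real.exp (-α * ‖x - y‖ ^ 2 / s) * b y)

/-!
Split the time integral at `s = t / 2`. On the first half `t - s ≥ t / 2`, so the prefactor
`(t - s)^{-d/2}` is at most `2^{d/2} t^{-d/2}`; on the second half the same holds for `s^{-d/2}`,
and `s^{-1/2} ≤ (t - s)^{-1/2}`. For the exponents, the triangle inequality
`|x - y| ≤ |x - z| + |z - y|` and Sedrakyan's inequality `(u + v)² / (P + Q) ≤ u² / P + v² / Q`
extract the factor `exp (-a₁ |x - y|² / 2t)` and leave a Gaussian of rate `α` in `z` around `y`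
(first half) or around `x` (second half, after reflecting `s ↦ t - s`), whose space-time integral
is at most `N_t^α(b)`.
-/

theorem sq_div_le_sq_div_add_sq_div {u v w P Q T : ℝ} (hP : 0 < P) (hQ : 0 < Q) (hT : P + Q ≤ T)
    (hw : 0 ≤ w) (hwuv : w ≤ u + v) : w ^ 2 / T ≤ u ^ 2 / P + v ^ 2 / Q :=
  calc w ^ 2 / T ≤ (u + v) ^ 2 / (P + Q) := by gcongr
    _ ≤ u ^ 2 / P + v ^ 2 / Q := by
      simpa [Fin.sum_univ_two] using
        Finset.sq_sum_div_le_sum_sq_div Finset.univ ![u, v] (g := ![P, Q])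
          (by simp [Fin.forall_fin_two, hP, hQ])

theorem gaussExponent_le_of_two_mul_le {a₁ a₂ α s t u v w : ℝ} (ha₁ : 0 < a₁)
    (hα : 2 * α ≤ a₂ - a₁) (hs : 0 < s) (hst : 2 * s ≤ t) (hw : 0 ≤ w) (hwuv : w ≤ u + v) :
    a₁ * w ^ 2 / (2 * t) + α * v ^ 2 / s ≤ a₁ * u ^ 2 / (2 * (t - s)) + a₂ * v ^ 2 / (2 * s) := by
  have hsplit := sq_div_le_sq_div_add_sq_div (P := 2 * (t - s) / a₁) (Q := 2 * s / a₁)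
    (T := 2 * t / a₁) (by apply div_pos <;> linarith) (by positivity) (le_of_eq (by ring)) hw hwuv
  simp only [div_div_eq_mul_div] at hsplit
  have hα' : 0 ≤ v ^ 2 / (2 * s) * (a₂ - a₁ - 2 * α) :=
    mul_nonneg (by positivity) (by linarith)
  linear_combination hsplit + hα'

theorem gaussExponent_le_of_le_two_mul {a₁ a₂ α s t u v w : ℝ} (ha₁ : 0 < a₁) (ha₁₂ : a₁ ≤ a₂)
    (hα : 2 * α * (2 * a₂ - a₁) ≤ a₁ * (a₂ - a₁)) (hst : s < t) (hts : t ≤ 2 * s)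
    (hw : 0 ≤ w) (hwuv : w ≤ u + v) :
    a₁ * w ^ 2 / (2 * t) + α * u ^ 2 / (t - s) ≤
      a₁ * u ^ 2 / (2 * (t - s)) + a₂ * v ^ 2 / (2 * s) := by
  have ha₂ : 0 < a₂ := ha₁.trans_le ha₁₂
  have h2a : 0 < 2 * a₂ - a₁ := by linarith
  have hts' : 0 < t - s := by linarith
  -- `u² / P = A u² / 2(t - s)` with `A = a₁ a₂ / (2 a₂ - a₁)`, the largest weight for which
  -- `P + Q ≤ T` still holds at `s = t / 2`; the rest `(a₁ - A) u² / 2(t - s)` pays for `α`.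
  have hPQ : 2 * (t - s) * (2 * a₂ - a₁) / (a₁ * a₂) + 2 * s / a₂ ≤ 2 * t / a₁ := by
    have key : 2 * t / a₁ - (2 * (t - s) * (2 * a₂ - a₁) / (a₁ * a₂) + 2 * s / a₂) =
        2 * (a₂ - a₁) * (2 * s - t) / (a₁ * a₂) := by
      field_simp
      ring
    have : 0 ≤ 2 * (a₂ - a₁) * (2 * s - t) / (a₁ * a₂) :=
      div_nonneg (mul_nonneg (by linarith) (by linarith)) (by positivity)
    linarith
  have hsplit := sq_div_le_sq_div_add_sq_div (by positivity) (by apply div_pos <;> linarith)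
    hPQ hw hwuv
  simp only [div_div_eq_mul_div] at hsplit
  have key : a₁ * u ^ 2 / (2 * (t - s)) - u ^ 2 * (a₁ * a₂) / (2 * (t - s) * (2 * a₂ - a₁))
      - α * u ^ 2 / (t - s) =
      u ^ 2 / (2 * (t - s) * (2 * a₂ - a₁)) * (a₁ * (a₂ - a₁) - 2 * α * (2 * a₂ - a₁)) := by
    field_simp
    ring
  have hα' : 0 ≤ u ^ 2 / (2 * (t - s) * (2 * a₂ - a₁)) *
      (a₁ * (a₂ - a₁) - 2 * α * (2 * a₂ - a₁)) := mul_nonneg (by positivity) (by linarith)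
  linear_combination hsplit + hα' - key

theorem rpow_neg_le_two_rpow_mul {e t τ : ℝ} (he : 0 ≤ e) (ht : 0 < t) (htτ : t ≤ 2 * τ) :
    τ ^ (-e) ≤ 2 ^ e * t ^ (-e) :=
  calc τ ^ (-e) ≤ (t / 2) ^ (-e) := rpow_le_rpow_of_nonpos (by positivity) (by linarith) (by linarith)
    _ = 2 ^ e * t ^ (-e) := by
      rw [div_rpow ht.le zero_le_two, rpow_neg zero_le_two, div_inv_eq_mul, mul_comm]

noncomputable def katoKernel (d : ℕ) (α s : ℝ) (x y : EuclideanSpace ℝ (Fin d)) : ℝ :=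
  s ^ (-((d : ℝ) + 1) / 2) * Real.exp (-α * ‖x - y‖ ^ 2 / s)

variable {d : ℕ}

theorem setLIntegral_katoKernel_le_katoN {α t : ℝ} {S : Set ℝ} (hS : S ⊆ Ioc 0 t)
    (b : EuclideanSpace ℝ (Fin d) → ℝ) (x : EuclideanSpace ℝ (Fin d)) :
    ∫⁻ s in S, ∫⁻ z, ENNReal.ofReal (katoKernel d α s x z * b z) ≤ katoN d α t b :=
  (lintegral_mono_set hS).trans
    (le_iSup (fun x => ∫⁻ s in Ioc 0 t, ∫⁻ z, ENNReal.ofReal (katoKernel d α s x z * b z)) x)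

theorem gaussG_mul_gaussG_le_of_two_mul_le {a₁ a₂ α s t : ℝ} (ha₁ : 0 < a₁)
    (hα : 2 * α ≤ a₂ - a₁) (hs : 0 < s) (hst : 2 * s ≤ t) (x y z : EuclideanSpace ℝ (Fin d)) :
    gaussG d a₁ (t - s) x z * s ^ (-(1 : ℝ) / 2) * gaussG d a₂ s z y ≤
      2 ^ ((d : ℝ) / 2) * gaussG d a₁ t x y * katoKernel d α s y z := by
  have ht : 0 < t := by linarith
  have hpow : (t - s) ^ (-(d : ℝ) / 2) * (s ^ (-(1 : ℝ) / 2) * s ^ (-(d : ℝ) / 2)) ≤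
      2 ^ ((d : ℝ) / 2) * t ^ (-(d : ℝ) / 2) * s ^ (-((d : ℝ) + 1) / 2) := by
    rw [← rpow_add hs, neg_div, neg_div, neg_div, ← neg_add, ← add_div, add_comm 1]
    gcongr
    exact rpow_neg_le_two_rpow_mul (by positivity) ht (by linarith)
  have hexp : Real.exp (-a₁ * ‖x - z‖ ^ 2 / (2 * (t - s))) * Real.exp (-a₂ * ‖z - y‖ ^ 2 / (2 * s))
      ≤ Real.exp (-a₁ * ‖x - y‖ ^ 2 / (2 * t)) * Real.exp (-α * ‖y - z‖ ^ 2 / s) := by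
    rw [← exp_add, ← exp_add, exp_le_exp, norm_sub_rev y z]
    linear_combination gaussExponent_le_of_two_mul_le ha₁ hα hs hst (norm_nonneg _)
      (norm_sub_le_norm_sub_add_norm_sub x z y)
  calc gaussG d a₁ (t - s) x z * s ^ (-(1 : ℝ) / 2) * gaussG d a₂ s z y
      = ((t - s) ^ (-(d : ℝ) / 2) * (s ^ (-(1 : ℝ) / 2) * s ^ (-(d : ℝ) / 2))) *
          (Real.exp (-a₁ * ‖x - z‖ ^ 2 / (2 * (t - s))) *
            Real.exp (-a₂ * ‖z - y‖ ^ 2 / (2 * s))) := by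
        unfold gaussG; ring
    _ ≤ (2 ^ ((d : ℝ) / 2) * t ^ (-(d : ℝ) / 2) * s ^ (-((d : ℝ) + 1) / 2)) *
          (Real.exp (-a₁ * ‖x - y‖ ^ 2 / (2 * t)) * Real.exp (-α * ‖y - z‖ ^ 2 / s)) := by
        gcongr
    _ = 2 ^ ((d : ℝ) / 2) * gaussG d a₁ t x y * katoKernel d α s y z := by
        unfold gaussG katoKernel; ring

theorem gaussG_mul_gaussG_le_of_le_two_mul {a₁ a₂ α s t : ℝ} (ha₁ : 0 < a₁) (ha₁₂ : a₁ ≤ a₂)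
    (hα : 2 * α * (2 * a₂ - a₁) ≤ a₁ * (a₂ - a₁)) (hst : s < t) (hts : t ≤ 2 * s)
    (x y z : EuclideanSpace ℝ (Fin d)) :
    gaussG d a₁ (t - s) x z * s ^ (-(1 : ℝ) / 2) * gaussG d a₂ s z y ≤
      2 ^ ((d : ℝ) / 2) * gaussG d a₁ t x y * katoKernel d α (t - s) x z := by
  have hts' : 0 < t - s := by linarith
  have hs : 0 < s := by linarith
  have ht : 0 < t := by linarith
  have hpow : (t - s) ^ (-(d : ℝ) / 2) * (s ^ (-(1 : ℝ) / 2) * s ^ (-(d : ℝ) / 2)) ≤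
      2 ^ ((d : ℝ) / 2) * t ^ (-(d : ℝ) / 2) * (t - s) ^ (-((d : ℝ) + 1) / 2) := by
    have hhalf : s ^ (-(1 : ℝ) / 2) ≤ (t - s) ^ (-(1 : ℝ) / 2) :=
      rpow_le_rpow_of_nonpos hts' (by linarith) (by norm_num)
    have hd : s ^ (-(d : ℝ) / 2) ≤ 2 ^ ((d : ℝ) / 2) * t ^ (-(d : ℝ) / 2) := by
      rw [neg_div]; exact rpow_neg_le_two_rpow_mul (by positivity) ht hts
    calc (t - s) ^ (-(d : ℝ) / 2) * (s ^ (-(1 : ℝ) / 2) * s ^ (-(d : ℝ) / 2))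
        ≤ (t - s) ^ (-(d : ℝ) / 2) * ((t - s) ^ (-(1 : ℝ) / 2) *
            (2 ^ ((d : ℝ) / 2) * t ^ (-(d : ℝ) / 2))) := by gcongr
      _ = _ := by
        rw [show -((d : ℝ) + 1) / 2 = -(d : ℝ) / 2 + -(1 : ℝ) / 2 by ring, rpow_add hts']
        ring
  have hexp : Real.exp (-a₁ * ‖x - z‖ ^ 2 / (2 * (t - s))) * Real.exp (-a₂ * ‖z - y‖ ^ 2 / (2 * s))
      ≤ Real.exp (-a₁ * ‖x - y‖ ^ 2 / (2 * t)) * Real.exp (-α * ‖x - z‖ ^ 2 / (t - s)) := by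
    rw [← exp_add, ← exp_add, exp_le_exp]
    linear_combination gaussExponent_le_of_le_two_mul ha₁ ha₁₂ hα hst hts (norm_nonneg _)
      (norm_sub_le_norm_sub_add_norm_sub x z y)
  calc gaussG d a₁ (t - s) x z * s ^ (-(1 : ℝ) / 2) * gaussG d a₂ s z y
      = ((t - s) ^ (-(d : ℝ) / 2) * (s ^ (-(1 : ℝ) / 2) * s ^ (-(d : ℝ) / 2))) *
          (Real.exp (-a₁ * ‖x - z‖ ^ 2 / (2 * (t - s))) *
            Real.exp (-a₂ * ‖z - y‖ ^ 2 / (2 * s))) := by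
        unfold gaussG; ring
    _ ≤ (2 ^ ((d : ℝ) / 2) * t ^ (-(d : ℝ) / 2) * (t - s) ^ (-((d : ℝ) + 1) / 2)) *
          (Real.exp (-a₁ * ‖x - y‖ ^ 2 / (2 * t)) * Real.exp (-α * ‖x - z‖ ^ 2 / (t - s))) := by
        gcongr
    _ = 2 ^ ((d : ℝ) / 2) * gaussG d a₁ t x y * katoKernel d α (t - s) x z := by
        unfold gaussG katoKernel; ring

theorem setLIntegral_lintegral_ofReal_le_mul {β : Type*} [MeasurableSpace β] {μ : Measure β}
    {S : Set ℝ} (hS : MeasurableSet S) {c : ℝ} (hc : 0 ≤ c) {f g : ℝ → β → ℝ}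
    (hfg : ∀ s ∈ S, ∀ z, f s z ≤ c * g s z) :
    ∫⁻ s in S, ∫⁻ z, ENNReal.ofReal (f s z) ∂μ ≤
      ENNReal.ofReal c * ∫⁻ s in S, ∫⁻ z, ENNReal.ofReal (g s z) ∂μ :=
  calc ∫⁻ s in S, ∫⁻ z, ENNReal.ofReal (f s z) ∂μ
      ≤ ∫⁻ s in S, ENNReal.ofReal c * ∫⁻ z, ENNReal.ofReal (g s z) ∂μ := by
        refine setLIntegral_mono' hS fun s hs => ?_
        rw [← lintegral_const_mul' _ _ ENNReal.ofReal_ne_top]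
        refine lintegral_mono fun z => ?_
        rw [← ENNReal.ofReal_mul hc]
        exact ENNReal.ofReal_le_ofReal (hfg s hs z)
    _ = _ := lintegral_const_mul' _ _ ENNReal.ofReal_ne_top

theorem setLIntegral_Ioo_comp_const_sub (F : ℝ → ℝ≥0∞) (a b c : ℝ) :
    ∫⁻ s in Ioo a b, F (c - s) = ∫⁻ s in Ioo (c - b) (c - a), F s := by
  rw [← image_const_sub_Ioo]
  exact (Measure.measurePreserving_sub_left volume c).setLIntegral_comp_emb
    (MeasurableEquiv.subLeft c).measurableEmbedding F _

theorem setLIntegral_Ioc_half_le_katoN {a₁ a₂ α t : ℝ} (ha₁ : 0 < a₁) (hα : 2 * α ≤ a₂ - a₁)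
    (ht : 0 < t) {b : EuclideanSpace ℝ (Fin d) → ℝ} (hb : ∀ z, 0 ≤ b z)
    (x y : EuclideanSpace ℝ (Fin d)) :
    ∫⁻ s in Ioc 0 (t / 2), ∫⁻ z, ENNReal.ofReal
        (gaussG d a₁ (t - s) x z * b z * s ^ (-(1 : ℝ) / 2) * gaussG d a₂ s z y) ≤
      ENNReal.ofReal (2 ^ ((d : ℝ) / 2) * gaussG d a₁ t x y) * katoN d α t b := by
  have hc : 0 ≤ 2 ^ ((d : ℝ) / 2) * gaussG d a₁ t x y := by unfold gaussG; positivity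
  have hpt : ∀ s ∈ Ioc 0 (t / 2), ∀ z,
      gaussG d a₁ (t - s) x z * b z * s ^ (-(1 : ℝ) / 2) * gaussG d a₂ s z y ≤
        2 ^ ((d : ℝ) / 2) * gaussG d a₁ t x y * (katoKernel d α s y z * b z) :=
    fun s ⟨hs, hst⟩ z =>
      calc _ = gaussG d a₁ (t - s) x z * s ^ (-(1 : ℝ) / 2) * gaussG d a₂ s z y * b z := by ring
        _ ≤ 2 ^ ((d : ℝ) / 2) * gaussG d a₁ t x y * katoKernel d α s y z * b z :=
          mul_le_mul_of_nonneg_right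
            (gaussG_mul_gaussG_le_of_two_mul_le ha₁ hα hs (by linarith) x y z) (hb z)
        _ = _ := by ring
  exact (setLIntegral_lintegral_ofReal_le_mul measurableSet_Ioc hc hpt).trans
    (mul_le_mul_right (setLIntegral_katoKernel_le_katoN (Ioc_subset_Ioc_right (by linarith)) b y) _)

theorem setLIntegral_Ioo_half_le_katoN {a₁ a₂ α t : ℝ} (ha₁ : 0 < a₁) (ha₁₂ : a₁ ≤ a₂)
    (hα : 2 * α * (2 * a₂ - a₁) ≤ a₁ * (a₂ - a₁)) (ht : 0 < t)
    {b : EuclideanSpace ℝ (Fin d) → ℝ} (hb : ∀ z, 0 ≤ b z) (x y : EuclideanSpace ℝ (Fin d)) :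
    ∫⁻ s in Ioo (t / 2) t, ∫⁻ z, ENNReal.ofReal
        (gaussG d a₁ (t - s) x z * b z * s ^ (-(1 : ℝ) / 2) * gaussG d a₂ s z y) ≤
      ENNReal.ofReal (2 ^ ((d : ℝ) / 2) * gaussG d a₁ t x y) * katoN d α t b := by
  have hc : 0 ≤ 2 ^ ((d : ℝ) / 2) * gaussG d a₁ t x y := by unfold gaussG; positivity
  have hpt : ∀ s ∈ Ioo (t / 2) t, ∀ z,
      gaussG d a₁ (t - s) x z * b z * s ^ (-(1 : ℝ) / 2) * gaussG d a₂ s z y ≤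
        2 ^ ((d : ℝ) / 2) * gaussG d a₁ t x y * (katoKernel d α (t - s) x z * b z) :=
    fun s ⟨hts, hst⟩ z =>
      calc _ = gaussG d a₁ (t - s) x z * s ^ (-(1 : ℝ) / 2) * gaussG d a₂ s z y * b z := by ring
        _ ≤ 2 ^ ((d : ℝ) / 2) * gaussG d a₁ t x y * katoKernel d α (t - s) x z * b z :=
          mul_le_mul_of_nonneg_right
            (gaussG_mul_gaussG_le_of_le_two_mul ha₁ ha₁₂ hα hst (by linarith) x y z) (hb z)
        _ = _ := by ring
  refine (setLIntegral_lintegral_ofReal_le_mul measurableSet_Ioo hc hpt).trans ?_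
  rw [setLIntegral_Ioo_comp_const_sub (fun σ => ∫⁻ z, ENNReal.ofReal (katoKernel d α σ x z * b z)),
    sub_self, sub_half]
  exact mul_le_mul_right (setLIntegral_katoKernel_le_katoN
    (Ioo_subset_Ioc_self.trans (Ioc_subset_Ioc_right (by linarith))) b x) _

theorem stmt0_general (d : ℕ) (a₁ a₂ : ℝ) (ha₁ : 0 < a₁) (ha₁₂ : a₁ < a₂) :
    ∃ C₀ > (0 : ℝ), ∃ α > (0 : ℝ), ∀ b : EuclideanSpace ℝ (Fin d) → ℝ,
      Measurable b → (∀ z, 0 ≤ b z) → ∀ t > (0 : ℝ), ∀ x y : EuclideanSpace ℝ (Fin d),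
        (∫⁻ s in Set.Ioc (0 : ℝ) t, ∫⁻ z,
            ENNReal.ofReal
              (gaussG d a₁ (t - s) x z * b z * s ^ (-(1 : ℝ) / 2) * gaussG d a₂ s z y))
          ≤ ENNReal.ofReal C₀ * katoN d α t b * ENNReal.ofReal (gaussG d a₁ t x y) := by
  have h2a : 0 < 2 * a₂ - a₁ := by linarith
  set α := a₁ * (a₂ - a₁) / (2 * (2 * a₂ - a₁)) with hα
  have hα_early : 2 * α ≤ a₂ - a₁ := by
    rw [hα, mul_div_assoc', div_le_iff₀ (by positivity)]
    nlinarith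
  have hα_late : 2 * α * (2 * a₂ - a₁) ≤ a₁ * (a₂ - a₁) := le_of_eq (by rw [hα]; field_simp)
  refine ⟨2 * 2 ^ ((d : ℝ) / 2), by positivity, α,
    div_pos (mul_pos ha₁ (by linarith)) (by positivity), fun b _ hb0 t ht x y => ?_⟩
  -- the endpoint `s = t`, where `gaussG d a₁ 0` takes a junk value, is discarded
  calc _ = ∫⁻ s in Ioc 0 (t / 2) ∪ Ioo (t / 2) t, ∫⁻ z, ENNReal.ofReal
        (gaussG d a₁ (t - s) x z * b z * s ^ (-(1 : ℝ) / 2) * gaussG d a₂ s z y) := by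
        rw [Ioc_union_Ioo_eq_Ioo (by linarith) (by linarith)]
        exact setLIntegral_congr Ioo_ae_eq_Ioc.symm
    _ ≤ ENNReal.ofReal (2 ^ ((d : ℝ) / 2) * gaussG d a₁ t x y) * katoN d α t b +
          ENNReal.ofReal (2 ^ ((d : ℝ) / 2) * gaussG d a₁ t x y) * katoN d α t b :=
        (lintegral_union_le _ _ _).trans <| add_le_add
          (setLIntegral_Ioc_half_le_katoN ha₁ hα_early ht hb0 x y)
          (setLIntegral_Ioo_half_le_katoN ha₁ ha₁₂.le hα_late ht hb0 x y)
    _ = _ := by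
        rw [ENNReal.ofReal_mul (by positivity), ENNReal.ofReal_mul (by positivity),
          ENNReal.ofReal_ofNat]
        ring

theorem stmt0 (d : ℕ) (hd : 3 ≤ d) (a₁ a₂ : ℝ) (ha₁ : 0 < a₁) (ha₁₂ : a₁ < a₂) :
    ∃ C₀ > (0 : ℝ), ∃ α > (0 : ℝ), ∀ b : EuclideanSpace ℝ (Fin d) → ℝ,
      Measurable b → (∀ z, 0 ≤ b z) → ∀ t > (0 : ℝ), ∀ x y : EuclideanSpace ℝ (Fin d),
        (∫⁻ s in Set.Ioc (0 : ℝ) t, ∫⁻ z,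
            ENNReal.ofReal
              (gaussG d a₁ (t - s) x z * b z * s ^ (-(1 : ℝ) / 2) * gaussG d a₂ s z y))
          ≤ ENNReal.ofReal C₀ * katoN d α t b * ENNReal.ofReal (gaussG d a₁ t x y) :=
  stmt0_general d a₁ a₂ ha₁ ha₁₂
end

section
/- For every real z ≥ 0, the series Φ(z) := ∑_{n=0}^∞ z^n / √(n!) converges and satisfies Φ(z) ≤ (1 + z) · e^{z²}. -/
open Real

/-!
Split the series into even and odd terms. Since `k! ^ 2 ≤ (2k)! ≤ (2k+1)!`, the terms of index
`2k` and `2k + 1` are bounded by `(z²)^k / k!` and `z · (z²)^k / k!`, and `∑ (z²)^k / k! = e^{z²}`.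
-/

theorem factorial_le_sqrt_factorial {k m : ℕ} (h : 2 * k ≤ m) :
    (k.factorial : ℝ) ≤ √(m.factorial) := by
  rw [Real.le_sqrt (by positivity) (by positivity), sq]
  have hsq : k.factorial * k.factorial ≤ (k + k).factorial :=
    Nat.le_of_dvd (Nat.factorial_pos _) (Nat.factorial_mul_factorial_dvd_factorial_add k k)
  exact_mod_cast hsq.trans (Nat.factorial_le (by omega))

theorem div_sqrt_factorial_le_div_factorial {a : ℝ} (ha : 0 ≤ a) {k m : ℕ} (h : 2 * k ≤ m) :
    a / √(m.factorial) ≤ a / k.factorial :=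
  div_le_div_of_nonneg_left ha (by positivity) (factorial_le_sqrt_factorial h)

theorem summable_and_tsum_le_of_even_odd_le {f g : ℕ → ℝ} {a c : ℝ} (hf : ∀ n, 0 ≤ f n)
    (hg : HasSum g a) (heven : ∀ k, f (2 * k) ≤ g k) (hodd : ∀ k, f (2 * k + 1) ≤ c * g k) :
    Summable f ∧ ∑' n, f n ≤ (1 + c) * a := by
  have hse : Summable (fun k => f (2 * k)) :=
    hg.summable.of_nonneg_of_le (fun k => hf _) heven
  have hso : Summable (fun k => f (2 * k + 1)) :=
    (hg.summable.mul_left c).of_nonneg_of_le (fun k => hf _) hodd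
  refine ⟨(hse.hasSum.even_add_odd hso.hasSum).summable, ?_⟩
  calc ∑' n, f n = ∑' k, f (2 * k) + ∑' k, f (2 * k + 1) := (tsum_even_add_odd hse hso).symm
    _ ≤ a + c * a := add_le_add (hasSum_le heven hse.hasSum hg)
        (hasSum_le hodd hso.hasSum (hg.mul_left c))
    _ = (1 + c) * a := by ring

theorem stmt3 (z : ℝ) (hz : 0 ≤ z) :
    Summable (fun n : ℕ => z ^ n / Real.sqrt (n.factorial)) ∧
      ∑' n : ℕ, z ^ n / Real.sqrt (n.factorial) ≤ (1 + z) * Real.exp (z ^ 2) := by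
  have hexp : HasSum (fun k : ℕ => (z ^ 2) ^ k / k.factorial) (exp (z ^ 2)) :=
    Real.exp_eq_exp_ℝ ▸ NormedSpace.expSeries_div_hasSum_exp (z ^ 2)
  refine summable_and_tsum_le_of_even_odd_le (fun n => by positivity) hexp (fun k => ?_)
    (fun k => ?_)
  · rw [pow_mul]
    exact div_sqrt_factorial_le_div_factorial (by positivity) le_rfl
  · rw [pow_succ', pow_mul, mul_div_assoc]
    exact mul_le_mul_of_nonneg_left
      (div_sqrt_factorial_le_div_factorial (by positivity) (Nat.le_succ _)) hz
end

section
/- Let Y be a nonnegative random variable on a probability space and let c ≥ 0 be such that E[Y^n] ≤ √(n!) · c^n for every integer n ≥ 0. Then for every λ > 0, E[e^{λY}] ≤ (1 + λc) · e^{λ²c²} ≤ 2 · e^{2λ²c²}. -/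
open MeasureTheory Real
open scoped ENNReal Nat

/-!
Expand `exp (l Y)` in its power series and integrate termwise: the moment bound turns the
`n`-th term into `(l c)ⁿ / √n!`. Since `k! ≤ √(2k)!`, the even terms `(l c)^{2k} / √(2k)!` are
dominated by the terms of `exp ((l c)²)`, and the odd ones by `l c` times the same terms.
The second inequality is `1 + x ≤ eˣ ≤ 2 e^{x²}`, where the last step holds because
`x² - x + log 2 ≥ 0` (as `log 2 > 1/4`).
-/

lemma Nat.factorial_sq_le_factorial_two_mul (k : ℕ) : k ! ^ 2 ≤ (2 * k)! :=
  Nat.le_of_dvd (2 * k).factorial_pos <| by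
    simpa [sq, two_mul] using Nat.factorial_mul_factorial_dvd_factorial_add k k

lemma Real.factorial_le_sqrt_factorial_two_mul (k : ℕ) : (k ! : ℝ) ≤ √((2 * k)! : ℝ) :=
  Real.le_sqrt_of_sq_le <| by exact_mod_cast Nat.factorial_sq_le_factorial_two_mul k

lemma ENNReal.ofReal_exp_eq_tsum {x : ℝ} (hx : 0 ≤ x) :
    ENNReal.ofReal (exp x) = ∑' n : ℕ, ENNReal.ofReal (x ^ n / n !) := by
  rw [exp_eq_exp_ℝ, NormedSpace.exp_eq_tsum_div,
    ENNReal.ofReal_tsum_of_nonneg (fun n => by positivity) (Real.summable_pow_div_factorial x)]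

lemma ENNReal.tsum_ofReal_pow_div_sqrt_factorial_le {x : ℝ} (hx : 0 ≤ x) :
    ∑' n : ℕ, ENNReal.ofReal (x ^ n / √(n ! : ℝ)) ≤ ENNReal.ofReal ((1 + x) * exp (x ^ 2)) := by
  have heven (k : ℕ) : x ^ (2 * k) / √((2 * k)! : ℝ) ≤ (x ^ 2) ^ k / k ! := by
    rw [← pow_mul]
    gcongr
    exact Real.factorial_le_sqrt_factorial_two_mul k
  have hodd (k : ℕ) : x ^ (2 * k + 1) / √((2 * k + 1)! : ℝ) ≤ x * ((x ^ 2) ^ k / k !) := by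
    rw [pow_succ, ← pow_mul, mul_comm, mul_div_assoc]
    gcongr
    exact (Real.factorial_le_sqrt_factorial_two_mul k).trans
      (Real.sqrt_le_sqrt (by exact_mod_cast Nat.factorial_le (Nat.le_succ _)))
  rw [← tsum_even_add_odd ENNReal.summable ENNReal.summable, add_mul, one_mul,
    ENNReal.ofReal_add (by positivity) (by positivity), ENNReal.ofReal_mul' (by positivity),
    ENNReal.ofReal_exp_eq_tsum (sq_nonneg x), ← ENNReal.tsum_mul_left]
  refine add_le_add (ENNReal.tsum_le_tsum fun k => ENNReal.ofReal_le_ofReal (heven k))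
    (ENNReal.tsum_le_tsum fun k => ?_)
  rw [← ENNReal.ofReal_mul hx]
  exact ENNReal.ofReal_le_ofReal (hodd k)

lemma MeasureTheory.lintegral_ofReal_exp_mul_eq_tsum {Ω : Type*} [MeasurableSpace Ω]
    {μ : Measure Ω} {Y : Ω → ℝ} (hYm : Measurable Y) (hY0 : ∀ ω, 0 ≤ Y ω) {l : ℝ} (hl : 0 ≤ l) :
    ∫⁻ ω, ENNReal.ofReal (exp (l * Y ω)) ∂μ
      = ∑' n : ℕ, ENNReal.ofReal (l ^ n / n !) * ∫⁻ ω, ENNReal.ofReal (Y ω ^ n) ∂μ := by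
  have hterm (n : ℕ) (ω : Ω) : ENNReal.ofReal ((l * Y ω) ^ n / n !)
      = ENNReal.ofReal (l ^ n / n !) * ENNReal.ofReal (Y ω ^ n) := by
    rw [← ENNReal.ofReal_mul (by positivity), mul_pow, div_mul_eq_mul_div, mul_comm (l ^ n)]
  simp_rw [ENNReal.ofReal_exp_eq_tsum (mul_nonneg hl (hY0 _)), hterm]
  rw [lintegral_tsum fun n => ((hYm.pow_const n).ennreal_ofReal.const_mul _).aemeasurable]
  exact tsum_congr fun n => lintegral_const_mul _ (hYm.pow_const n).ennreal_ofReal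

lemma Real.one_add_mul_exp_sq_le (x : ℝ) : (1 + x) * exp (x ^ 2) ≤ 2 * exp (2 * x ^ 2) := by
  have hexp : exp x ≤ 2 * exp (x ^ 2) := by
    rw [← exp_log two_pos, ← exp_add, exp_le_exp]
    nlinarith [log_two_gt_d9, sq_nonneg (x - 1 / 2)]
  calc (1 + x) * exp (x ^ 2) ≤ exp x * exp (x ^ 2) := by
        gcongr
        linarith [add_one_le_exp x]
    _ ≤ 2 * exp (x ^ 2) * exp (x ^ 2) := by gcongr
    _ = 2 * exp (2 * x ^ 2) := by rw [mul_assoc, ← exp_add, ← two_mul]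

theorem stmt4_general {Ω : Type*} [MeasurableSpace Ω] (μ : Measure Ω)
    (Y : Ω → ℝ) (hYm : Measurable Y) (hY0 : ∀ ω, 0 ≤ Y ω) (c : ℝ) (hc : 0 ≤ c)
    (hmom : ∀ n : ℕ,
      (∫⁻ ω, ENNReal.ofReal (Y ω ^ n) ∂μ) ≤ ENNReal.ofReal (Real.sqrt (n.factorial) * c ^ n))
    (l : ℝ) (hl : 0 < l) :
    (∫⁻ ω, ENNReal.ofReal (Real.exp (l * Y ω)) ∂μ)
        ≤ ENNReal.ofReal ((1 + l * c) * Real.exp (l ^ 2 * c ^ 2)) ∧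
      ENNReal.ofReal ((1 + l * c) * Real.exp (l ^ 2 * c ^ 2))
        ≤ ENNReal.ofReal (2 * Real.exp (2 * l ^ 2 * c ^ 2)) := by
  have hterm (n : ℕ) : l ^ n / n ! * (√(n ! : ℝ) * c ^ n) = (l * c) ^ n / √(n ! : ℝ) := by
    have hsqrt : 0 < √(n ! : ℝ) := Real.sqrt_pos.2 (by positivity)
    have hsq : √(n ! : ℝ) ^ 2 = n ! := Real.sq_sqrt (Nat.cast_nonneg _)
    field_simp
    rw [hsq]
    ring
  rw [show l ^ 2 * c ^ 2 = (l * c) ^ 2 by ring, show 2 * l ^ 2 * c ^ 2 = 2 * (l * c) ^ 2 by ring]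
  refine ⟨?_, ENNReal.ofReal_le_ofReal (Real.one_add_mul_exp_sq_le (l * c))⟩
  calc ∫⁻ ω, ENNReal.ofReal (exp (l * Y ω)) ∂μ
      = ∑' n : ℕ, ENNReal.ofReal (l ^ n / n !) * ∫⁻ ω, ENNReal.ofReal (Y ω ^ n) ∂μ :=
        lintegral_ofReal_exp_mul_eq_tsum hYm hY0 hl.le
    _ ≤ ∑' n : ℕ, ENNReal.ofReal ((l * c) ^ n / √(n ! : ℝ)) := by
        gcongr with n
        rw [← hterm, ENNReal.ofReal_mul (by positivity)]
        gcongr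
        exact hmom n
    _ ≤ ENNReal.ofReal ((1 + l * c) * exp ((l * c) ^ 2)) :=
        ENNReal.tsum_ofReal_pow_div_sqrt_factorial_le (mul_nonneg hl.le hc)

theorem stmt4 {Ω : Type*} [MeasurableSpace Ω] (μ : Measure Ω) [IsProbabilityMeasure μ]
    (Y : Ω → ℝ) (hYm : Measurable Y) (hY0 : ∀ ω, 0 ≤ Y ω) (c : ℝ) (hc : 0 ≤ c)
    (hmom : ∀ n : ℕ,
      (∫⁻ ω, ENNReal.ofReal (Y ω ^ n) ∂μ) ≤ ENNReal.ofReal (Real.sqrt (n.factorial) * c ^ n))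
    (l : ℝ) (hl : 0 < l) :
    (∫⁻ ω, ENNReal.ofReal (Real.exp (l * Y ω)) ∂μ)
        ≤ ENNReal.ofReal ((1 + l * c) * Real.exp (l ^ 2 * c ^ 2)) ∧
      ENNReal.ofReal ((1 + l * c) * Real.exp (l ^ 2 * c ^ 2))
        ≤ ENNReal.ofReal (2 * Real.exp (2 * l ^ 2 * c ^ 2)) :=
  stmt4_general μ Y hYm hY0 c hc hmom l hl
end

section
/- Let d ≥ 1 be an integer, let C₄, C₅, C₆ > 0, and let q : (0,∞) × ℝ^d × ℝ^d → [0,∞) be measurable with q(s,x,y) ≤ C₄ · e^{C₅ s} · s^{−d/2} · exp(−C₆|x−y|²/s) for all s > 0 and x, y ∈ ℝ^d. Let μ be a positive measure on ℝ^d, let φ : ℝ^d → [0,∞) be measurable with ∫_{ℝ^d} φ(x) dx = 1, and set b(x) := ∫_{ℝ^d} φ(x−y) μ(dy). Then for every t ∈ (0,1], Λ_t(b) ≤ C₄ · e^{C₅} · N_t^{C₆}(μ). -/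
/-!
For `s ≤ t ≤ 1` the Gaussian bound on `q` gives `s^{-1/2} q(s,x,y) ≤ C₄ e^{C₅} g_s(x - y)` with
`g_s(z) = s^{-(d+1)/2} exp(-C₆|z|²/s)`. Writing `b = φ ⋆ μ` and substituting `y = z + w`, Tonelli
turns `∫∫ g_s(x - y) b(y) dy ds` into `∫ φ(z) (∫∫ g_s((x - z) - w) μ(dw) ds) dz`, and the inner
double integral is at most `N_t^{C₆}(μ)`, while `∫ φ = 1`.
-/

open MeasureTheory Real Set
open scoped ENNReal

theorem sigmaFinite_of_lintegral_ne_top {α : Type*} [MeasurableSpace α] {μ : Measure α}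
    {f : α → ℝ≥0∞} (hf : Measurable f) (hf_ne_zero : ∀ x, f x ≠ 0) (hint : ∫⁻ x, f x ∂μ ≠ ∞) :
    SigmaFinite μ := by
  have : IsFiniteMeasure (μ.withDensity f) := isFiniteMeasure_withDensity hint
  have hinv : SigmaFinite ((μ.withDensity f).withDensity fun x ↦ (f x)⁻¹) :=
    SigmaFinite.withDensity_of_ne_top' fun x ↦ ENNReal.inv_ne_top.2 (hf_ne_zero x)
  have hf_ne_top : ∀ᵐ x ∂μ, f x ≠ ∞ := (ae_lt_top hf hint).mono fun _ hx ↦ hx.ne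
  rwa [withDensity_inv_same hf (ae_of_all _ hf_ne_zero) hf_ne_top] at hinv

theorem exists_lt_top_of_setLIntegral_ne_top {α : Type*} [MeasurableSpace α] {ν : Measure α}
    {s : Set α} (hs : MeasurableSet s) (hνs : ν s ≠ 0) {f : α → ℝ≥0∞}
    (hint : ∫⁻ x in s, f x ∂ν ≠ ∞) : ∃ x ∈ s, f x < ∞ := by
  by_contra! htop
  refine hint (eq_top_iff.2 ?_)
  calc ∞ = ∫⁻ _ in s, ∞ ∂ν := by rw [setLIntegral_const, ENNReal.top_mul hνs]
    _ ≤ ∫⁻ x in s, f x ∂ν := setLIntegral_mono' hs fun x hx ↦ htop x hx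

theorem sigmaFinite_of_setLIntegral_gaussian_ne_top {E : Type*} [NormedAddCommGroup E]
    [MeasurableSpace E] [OpensMeasurableSpace E] {μ : Measure E} {a b t : ℝ} (ht : 0 < t) (x : E)
    (hint : ∫⁻ s in Ioc 0 t, ∫⁻ y, ENNReal.ofReal (s ^ b * exp (-a * ‖x - y‖ ^ 2 / s)) ∂μ ≠ ∞) :
    SigmaFinite μ := by
  obtain ⟨s, hs, hfin⟩ := exists_lt_top_of_setLIntegral_ne_top measurableSet_Ioc
    (by simpa using ht) hint
  refine sigmaFinite_of_lintegral_ne_top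
    (Continuous.measurable (by fun_prop)).ennreal_ofReal (fun y ↦ ?_) hfin.ne
  exact ENNReal.ofReal_ne_zero_iff.2 (mul_pos (rpow_pos_of_pos hs.1 b) (exp_pos _))

section Convolution

variable {G : Type*} [AddCommGroup G] [MeasurableSpace G] [MeasurableAdd₂ G] [MeasurableSub₂ G]
  {ν : Measure G} [SFinite ν] [ν.IsAddRightInvariant] {μ : Measure G} [SFinite μ]
  {ψ : G → ℝ≥0∞}

theorem lintegral_mul_lintegral_sub_eq {h : G → ℝ≥0∞} (hh : Measurable h) (hψ : Measurable ψ) :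
    ∫⁻ y, h y * ∫⁻ w, ψ (y - w) ∂μ ∂ν = ∫⁻ z, ψ z * ∫⁻ w, h (z + w) ∂μ ∂ν := by
  have hψsub : Measurable fun p : G × G ↦ ψ (p.1 - p.2) := hψ.comp measurable_sub
  calc ∫⁻ y, h y * ∫⁻ w, ψ (y - w) ∂μ ∂ν
      = ∫⁻ y, ∫⁻ w, h y * ψ (y - w) ∂μ ∂ν :=
        lintegral_congr fun y ↦ (lintegral_const_mul _ (hψsub.comp measurable_prodMk_left)).symm
    _ = ∫⁻ w, ∫⁻ y, h y * ψ (y - w) ∂ν ∂μ :=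
        lintegral_lintegral_swap ((hh.comp measurable_fst).mul hψsub).aemeasurable
    _ = ∫⁻ w, ∫⁻ z, h (z + w) * ψ z ∂ν ∂μ := by
        refine lintegral_congr fun w ↦ ?_
        rw [← lintegral_add_right_eq_self _ w]
        simp only [add_sub_cancel_right]
    _ = ∫⁻ z, ∫⁻ w, h (z + w) * ψ z ∂μ ∂ν :=
        lintegral_lintegral_swap ((hh.comp (measurable_snd.add measurable_fst)).mul
          (hψ.comp measurable_snd)).aemeasurable
    _ = ∫⁻ z, ψ z * ∫⁻ w, h (z + w) ∂μ ∂ν := by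
        refine lintegral_congr fun z ↦ ?_
        simp only [mul_comm _ (ψ z)]
        exact lintegral_const_mul _ (hh.comp (measurable_const_add z))

theorem lintegral_lintegral_mul_lintegral_sub_le {T : Type*} [MeasurableSpace T] {ρ : Measure T}
    [SFinite ρ] {g : T → G → ℝ≥0∞} (hg : Measurable (Function.uncurry g)) (hψ : Measurable ψ)
    (x : G) :
    ∫⁻ s, ∫⁻ y, g s (x - y) * ∫⁻ w, ψ (y - w) ∂μ ∂ν ∂ρ
      ≤ (∫⁻ z, ψ z ∂ν) * ⨆ x', ∫⁻ s, ∫⁻ w, g s (x' - w) ∂μ ∂ρ := by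
  have hpot : Measurable fun p : T × G ↦ ∫⁻ w, g p.1 (x - p.2 - w) ∂μ :=
    (hg.comp (measurable_fst.fst.prodMk
      ((measurable_const.sub measurable_fst.snd).sub measurable_snd))).lintegral_prod_right'
  calc ∫⁻ s, ∫⁻ y, g s (x - y) * ∫⁻ w, ψ (y - w) ∂μ ∂ν ∂ρ
      = ∫⁻ s, ∫⁻ z, ψ z * ∫⁻ w, g s (x - z - w) ∂μ ∂ν ∂ρ := by
        refine lintegral_congr fun s ↦ ?_
        rw [lintegral_mul_lintegral_sub_eq (h := fun y ↦ g s (x - y))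
          ((hg.comp measurable_prodMk_left).comp (measurable_const.sub measurable_id)) hψ]
        simp only [sub_add_eq_sub_sub]
    _ = ∫⁻ z, ψ z * ∫⁻ s, ∫⁻ w, g s (x - z - w) ∂μ ∂ρ ∂ν := by
        rw [lintegral_lintegral_swap ((hψ.comp measurable_snd).mul hpot).aemeasurable]
        exact lintegral_congr fun z ↦ lintegral_const_mul _ (hpot.comp measurable_prodMk_right)
    _ ≤ ∫⁻ z, ψ z * ⨆ x', ∫⁻ s, ∫⁻ w, g s (x' - w) ∂μ ∂ρ ∂ν :=
        lintegral_mono fun z ↦ mul_le_mul_right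
          (le_iSup (fun x' ↦ ∫⁻ s, ∫⁻ w, g s (x' - w) ∂μ ∂ρ) (x - z)) _
    _ = (∫⁻ z, ψ z ∂ν) * ⨆ x', ∫⁻ s, ∫⁻ w, g s (x' - w) ∂μ ∂ρ := lintegral_mul_const _ hψ

end Convolution

theorem rpow_neg_half_mul_le_of_le_gaussian_bound {C₄ C₅ d s E v : ℝ} (h4 : 0 ≤ C₄)
    (h5 : 0 ≤ C₅) (hs : s ∈ Ioc 0 1) (hE : 0 ≤ E)
    (hv : v ≤ C₄ * exp (C₅ * s) * s ^ (-d / 2) * E) :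
    s ^ (-(1 : ℝ) / 2) * v ≤ C₄ * exp C₅ * (s ^ (-(d + 1) / 2) * E) := by
  calc s ^ (-(1 : ℝ) / 2) * v
      ≤ s ^ (-(1 : ℝ) / 2) * (C₄ * exp (C₅ * s) * s ^ (-d / 2) * E) :=
        mul_le_mul_of_nonneg_left hv (rpow_nonneg hs.1.le _)
    _ = C₄ * exp (C₅ * s) * (s ^ (-(d + 1) / 2) * E) := by
        rw [show -(d + 1) / 2 = -(1 : ℝ) / 2 + -d / 2 by ring, rpow_add hs.1]
        ring
    _ ≤ C₄ * exp C₅ * (s ^ (-(d + 1) / 2) * E) := by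
        gcongr
        · exact mul_nonneg (rpow_nonneg hs.1.le _) hE
        · exact mul_le_of_le_one_right h5 hs.2

theorem stmt7_general (d : ℕ) (C₄ C₅ C₆ : ℝ) (h4 : 0 < C₄) (h5 : 0 < C₅)
    (q : ℝ → EuclideanSpace ℝ (Fin d) → EuclideanSpace ℝ (Fin d) → ℝ)
    (hqub : ∀ s : ℝ, 0 < s → ∀ x y : EuclideanSpace ℝ (Fin d),
      q s x y ≤ C₄ * Real.exp (C₅ * s) * s ^ (-(d : ℝ) / 2) * Real.exp (-C₆ * ‖x - y‖ ^ 2 / s))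
    (μ : Measure (EuclideanSpace ℝ (Fin d)))
    (φ : EuclideanSpace ℝ (Fin d) → ℝ) (hφm : Measurable φ)
    (hφ1 : (∫⁻ x, ENNReal.ofReal (φ x)) = 1)
    (t : ℝ) (ht : t ∈ Set.Ioc (0 : ℝ) 1) :
    (⨆ x : EuclideanSpace ℝ (Fin d), ∫⁻ s in Set.Ioc (0 : ℝ) t, ∫⁻ y,
        ENNReal.ofReal (s ^ (-(1 : ℝ) / 2) * q s x y) * ∫⁻ w, ENNReal.ofReal (φ (y - w)) ∂μ)
      ≤ ENNReal.ofReal (C₄ * Real.exp C₅) *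
          ⨆ x : EuclideanSpace ℝ (Fin d), ∫⁻ s in Set.Ioc (0 : ℝ) t, ∫⁻ y,
            ENNReal.ofReal (s ^ (-((d : ℝ) + 1) / 2) * Real.exp (-C₆ * ‖x - y‖ ^ 2 / s)) ∂μ := by
  set P := fun x : EuclideanSpace ℝ (Fin d) ↦ ∫⁻ s in Set.Ioc (0 : ℝ) t, ∫⁻ y,
    ENNReal.ofReal (s ^ (-((d : ℝ) + 1) / 2) * Real.exp (-C₆ * ‖x - y‖ ^ 2 / s)) ∂μ
  set c := ENNReal.ofReal (C₄ * Real.exp C₅)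
  have hc : c ≠ 0 := ENNReal.ofReal_ne_zero_iff.2 (by positivity)
  rcases eq_or_ne (⨆ x, P x) ∞ with hPtop | hPtop
  · rw [hPtop, ENNReal.mul_top hc]
    exact le_top
  -- `μ` is not assumed σ-finite, as Tonelli requires; a finite potential forces it.
  have : SigmaFinite μ := sigmaFinite_of_setLIntegral_gaussian_ne_top ht.1 0
    (ne_top_of_le_ne_top hPtop (le_iSup P 0))
  set g : ℝ → EuclideanSpace ℝ (Fin d) → ℝ≥0∞ := fun s z ↦
    ENNReal.ofReal (s ^ (-((d : ℝ) + 1) / 2) * Real.exp (-C₆ * ‖z‖ ^ 2 / s))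
  set b := fun y ↦ ∫⁻ w, ENNReal.ofReal (φ (y - w)) ∂μ
  have hg : Measurable (Function.uncurry g) := by
    refine Measurable.ennreal_ofReal ((measurable_fst.pow_const _).mul ?_)
    fun_prop
  calc _ ≤ ⨆ x, ∫⁻ s in Ioc 0 t, ∫⁻ y, c * (g s (x - y) * b y) := by
        refine iSup_mono fun x ↦ setLIntegral_mono' measurableSet_Ioc fun s hs ↦ ?_
        refine lintegral_mono fun y ↦ ?_
        rw [← mul_assoc, ← ENNReal.ofReal_mul (by positivity)]
        gcongr ?_ * _
        exact ENNReal.ofReal_le_ofReal <| rpow_neg_half_mul_le_of_le_gaussian_bound h4.le h5.le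
          ⟨hs.1, hs.2.trans ht.2⟩ (exp_pos _).le (hqub s hs.1 x y)
    _ = c * ⨆ x, ∫⁻ s in Ioc 0 t, ∫⁻ y, g s (x - y) * b y := by
        simp only [lintegral_const_mul' c _ ENNReal.ofReal_ne_top, ENNReal.mul_iSup]
    _ ≤ c * ⨆ x, P x := by
        gcongr c * ?_
        simpa [hφ1] using lintegral_lintegral_mul_lintegral_sub_le (ν := volume) (μ := μ)
          (ρ := volume.restrict (Ioc 0 t)) hg hφm.ennreal_ofReal

theorem stmt7 (d : ℕ) (hd : 1 ≤ d) (C₄ C₅ C₆ : ℝ) (h4 : 0 < C₄) (h5 : 0 < C₅) (h6 : 0 < C₆)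
    (q : ℝ → EuclideanSpace ℝ (Fin d) → EuclideanSpace ℝ (Fin d) → ℝ)
    (hqm : Measurable fun p : ℝ × EuclideanSpace ℝ (Fin d) × EuclideanSpace ℝ (Fin d) =>
      q p.1 p.2.1 p.2.2)
    (hq0 : ∀ s x y, 0 ≤ q s x y)
    (hqub : ∀ s : ℝ, 0 < s → ∀ x y : EuclideanSpace ℝ (Fin d),
      q s x y ≤ C₄ * Real.exp (C₅ * s) * s ^ (-(d : ℝ) / 2) * Real.exp (-C₆ * ‖x - y‖ ^ 2 / s))
    (μ : Measure (EuclideanSpace ℝ (Fin d)))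
    (φ : EuclideanSpace ℝ (Fin d) → ℝ) (hφm : Measurable φ) (hφ0 : ∀ x, 0 ≤ φ x)
    (hφ1 : (∫⁻ x, ENNReal.ofReal (φ x)) = 1)
    (t : ℝ) (ht : t ∈ Set.Ioc (0 : ℝ) 1) :
    (⨆ x : EuclideanSpace ℝ (Fin d), ∫⁻ s in Set.Ioc (0 : ℝ) t, ∫⁻ y,
        ENNReal.ofReal (s ^ (-(1 : ℝ) / 2) * q s x y) * ∫⁻ w, ENNReal.ofReal (φ (y - w)) ∂μ)
      ≤ ENNReal.ofReal (C₄ * Real.exp C₅) *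
          ⨆ x : EuclideanSpace ℝ (Fin d), ∫⁻ s in Set.Ioc (0 : ℝ) t, ∫⁻ y,
            ENNReal.ofReal (s ^ (-((d : ℝ) + 1) / 2) * Real.exp (-C₆ * ‖x - y‖ ^ 2 / s)) ∂μ :=
  stmt7_general d C₄ C₅ C₆ h4 h5 q hqub μ φ hφm hφ1 t ht
end

section
/- Let d ≥ 1 be an integer and let q : (0,∞) × ℝ^d × ℝ^d → [0,∞) be measurable and satisfy: (i) the Chapman–Kolmogorov equation q(t,x,y) = ∫_{ℝ^d} q(t−s,x,z) q(s,z,y) dz for 0 < s < t; (ii) the lower Gaussian bound q(t,x,y) ≥ C₁ e^{−C₂ t} t^{−d/2} exp(−C₃|x−y|²/t) for all t > 0 and x, y ∈ ℝ^d, with constants C₁, C₂, C₃ > 0; (iii) there is a function K : (0,1] → (0,∞) with K(r) → 0 as r → 0⁺ such that for all x, y ∈ ℝ^d, all 0 < δ < ε and all r ∈ (0,1], ∫_{B(y,ε)} q(r,x,z) dz ≥ (2πr)^{−d/2} ω_d (ε−δ)^d exp(−(|x−y|+ε−δ)²/(2r)) − 2 exp(−δ²/(r·K(r))). Then for every M >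 0, liminf_{t → 0⁺} inf_{x, y ∈ ℝ^d, |x−y| ≤ M} ( t · log q(t,x,y) + |x−y|²/2 ) ≥ 0; in particular liminf_{t→0⁺} t · log q(t,x,y) ≥ −|x−y|²/2 uniformly in x, y with |x−y| ≤ M. -/
open MeasureTheory Real Set Filter
open scoped ENNReal

/-!
Split `t = η t + (1 - η) t` in the Chapman–Kolmogorov equation and keep only the points
`z ∈ B(y, ε')`. There the Gaussian lower bound gives `q(η t, z, y) ≥ c exp (-C₃ ε'² / (η t))`,
while (iii) gives `q((1 - η) t, x, ·)` mass at least `c' exp (-(|x - y| + ε' - δ)² / (2 (1 - η) t))`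
on the ball as soon as `K` is so small that the error term is at most half of the main term.
Hence `q(t, x, y) ≥ c'' exp (-a / t)`, i.e. `t log q(t, x, y) ≥ -a - o(1)`, uniformly in `x, y`,
with `a = C₃ ε'² / η + (|x - y| + ε' - δ)² / (2 (1 - η))`; choosing first `η` and then `ε'`
small makes `a ≤ |x - y|² / 2 + ε` for all `|x - y| ≤ M`.
-/

open Topology

lemma eventually_neg_sub_le_mul_log {c ε : ℝ} (hc : 0 < c) (hε : 0 < ε) :
    ∀ᶠ t in 𝓝[>] (0 : ℝ), ∀ a f : ℝ, c * exp (-a / t) ≤ f → -a - ε ≤ t * log f := by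
  have hlim : Tendsto (fun t : ℝ => t * log c) (𝓝[>] 0) (𝓝 0) := by
    simpa using ((continuous_mul_const (log c)).tendsto 0).mono_left nhdsWithin_le_nhds
  filter_upwards [self_mem_nhdsWithin, hlim.eventually_const_lt (neg_lt_zero.2 hε)]
    with t (ht : 0 < t) hct a f hf
  calc -a - ε ≤ t * log c - a := by linarith
    _ = t * log (c * exp (-a / t)) := by
      rw [log_mul hc.ne' (exp_pos _).ne', log_exp]
      field_simp
      ring
    _ ≤ t * log f := by gcongr

lemma ofReal_mul_le_lintegral_mul {α : Type*} [MeasurableSpace α] {μ : Measure α}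
    {f g : α → ℝ} {s : Set α} {m I : ℝ} (hs : MeasurableSet s) (hf : ∀ z, 0 ≤ f z)
    (hm : 0 ≤ m) (hg : ∀ z ∈ s, m ≤ g z)
    (hI : ENNReal.ofReal I ≤ ∫⁻ z in s, ENNReal.ofReal (f z) ∂μ) :
    ENNReal.ofReal (m * I) ≤ ∫⁻ z, ENNReal.ofReal (f z * g z) ∂μ :=
  calc ENNReal.ofReal (m * I)
      ≤ ENNReal.ofReal m * ∫⁻ z in s, ENNReal.ofReal (f z) ∂μ := by
        rw [ENNReal.ofReal_mul hm]
        gcongr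
    _ = ∫⁻ z in s, ENNReal.ofReal (f z * m) ∂μ := by
        rw [← lintegral_const_mul' _ _ ENNReal.ofReal_ne_top]
        congr with z
        rw [ENNReal.ofReal_mul (hf z), mul_comm]
    _ ≤ ∫⁻ z in s, ENNReal.ofReal (f z * g z) ∂μ :=
        setLIntegral_mono' hs fun z hz =>
          ENNReal.ofReal_le_ofReal (mul_le_mul_of_nonneg_left (hg z hz) (hf z))
    _ ≤ ∫⁻ z, ENNReal.ofReal (f z * g z) ∂μ := setLIntegral_le_lintegral _ _

lemma mul_exp_le_gaussian {C₁ C₂ C₃ p t ρ R : ℝ} (hC₁ : 0 ≤ C₁) (hC₂ : 0 ≤ C₂)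
    (hC₃ : 0 ≤ C₃) (hp : p ≤ 0) (ht : 0 < t) (ht1 : t ≤ 1) (hρ : 0 ≤ ρ) (hρR : ρ ≤ R) :
    C₁ * exp (-C₂) * exp (-C₃ * R ^ 2 / t) ≤
      C₁ * exp (-C₂ * t) * t ^ p * exp (-C₃ * ρ ^ 2 / t) := by
  have htime : exp (-C₂) ≤ exp (-C₂ * t) := exp_le_exp.2 (by nlinarith)
  have hpow : 1 ≤ t ^ p := one_le_rpow_of_pos_of_le_one_of_nonpos ht ht1 hp
  have hspace : exp (-C₃ * R ^ 2 / t) ≤ exp (-C₃ * ρ ^ 2 / t) := by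
    gcongr exp (?_ / t)
    nlinarith [mul_le_mul_of_nonneg_left (pow_le_pow_left₀ hρ hρR 2) hC₃]
  calc C₁ * exp (-C₂) * exp (-C₃ * R ^ 2 / t)
      = C₁ * exp (-C₂) * 1 * exp (-C₃ * R ^ 2 / t) := by ring
    _ ≤ C₁ * exp (-C₂ * t) * t ^ p * exp (-C₃ * ρ ^ 2 / t) := by gcongr

lemma two_mul_exp_neg_div_le {a b c L r : ℝ} (hc : 0 < c) (hL : 0 ≤ L)
    (hcL : log (4 / c) ≤ L) (hab : a + L ≤ b) (hr : 0 < r) (hr1 : r ≤ 1) :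
    2 * exp (-b / r) ≤ c / 2 * exp (-a / r) := by
  have hLc : exp (-L) ≤ c / 4 := by
    calc exp (-L) ≤ exp (-log (4 / c)) := exp_le_exp.2 (neg_le_neg hcL)
      _ = c / 4 := by rw [exp_neg, exp_log (by positivity), inv_div]
  have hexp : -b / r ≤ -a / r + -L := by
    have : L ≤ L / r := le_div_self hL hr hr1
    have : (a + L) / r ≤ b / r := by gcongr
    rw [add_div] at this
    rw [neg_div, neg_div]
    linarith
  calc 2 * exp (-b / r) ≤ 2 * (exp (-a / r) * exp (-L)) := by
        rw [← exp_add]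
        gcongr
    _ ≤ 2 * (exp (-a / r) * (c / 4)) := by gcongr
    _ = c / 2 * exp (-a / r) := by ring

lemma eventually_ofReal_le_setLIntegral_ball {E : Type*} [SeminormedAddCommGroup E]
    [MeasurableSpace E] {μ : Measure E} {q : ℝ → E → E → ℝ} {K : ℝ → ℝ} {ω p M δ ε' : ℝ}
    {n : ℕ} (hKpos : ∀ r ∈ Ioc (0 : ℝ) 1, 0 < K r) (hKlim : Tendsto K (𝓝[>] 0) (𝓝 0))
    (hball : ∀ x y : E, ∀ r ∈ Ioc (0 : ℝ) 1,
      ENNReal.ofReal ((2 * π * r) ^ p * ω * (ε' - δ) ^ n *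
          exp (-(‖x - y‖ + ε' - δ) ^ 2 / (2 * r)) - 2 * exp (-δ ^ 2 / (r * K r)))
        ≤ ∫⁻ z in Metric.ball y ε', ENNReal.ofReal (q r x z) ∂μ)
    (hω : 0 < ω) (hp : p ≤ 0) (hδ : 0 < δ) (hδε' : δ < ε') :
    ∀ᶠ r in 𝓝[>] 0, ∀ x y : E, ‖x - y‖ ≤ M →
      ENNReal.ofReal (ω * (ε' - δ) ^ n / 2 * exp (-((‖x - y‖ + ε' - δ) ^ 2 / 2) / r))
        ≤ ∫⁻ z in Metric.ball y ε', ENNReal.ofReal (q r x z) ∂μ := by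
  set c := ω * (ε' - δ) ^ n
  have hc : 0 < c := by have := sub_pos.2 hδε'; positivity
  set L := max 0 (log (4 / c))
  set a₀ := (M + ε') ^ 2 / 2
  have hKsmall : ∀ᶠ r in 𝓝[>] 0, K r * (a₀ + L) < δ ^ 2 := by
    have := hKlim.mul_const (a₀ + L)
    rw [zero_mul] at this
    exact this.eventually_lt_const (by positivity)
  have hsmall : ∀ᶠ r in 𝓝[>] (0 : ℝ), r < 1 / (2 * π) :=
    (eventually_lt_nhds (by positivity)).filter_mono nhdsWithin_le_nhds
  filter_upwards [self_mem_nhdsWithin, hKsmall, hsmall] with r (hr : 0 < r) hKr hr2π x y hxy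
  have h2πr : 2 * π * r ≤ 1 := by
    rw [lt_div_iff₀ (by positivity)] at hr2π
    linarith
  have hr1 : r ≤ 1 := by nlinarith [pi_gt_three]
  have hK := hKpos r ⟨hr, hr1⟩
  set a := (‖x - y‖ + ε' - δ) ^ 2 / 2
  have ha : a ≤ a₀ := by
    have : 0 ≤ ‖x - y‖ + ε' - δ := by linarith [norm_nonneg (x - y)]
    simp only [a, a₀]
    gcongr
    linarith
  have hab : a + L ≤ δ ^ 2 / K r := by
    rw [le_div_iff₀ hK]
    nlinarith
  have hB := two_mul_exp_neg_div_le hc (le_max_left _ _) (le_max_right _ _) hab hr hr1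
  have hA : c * exp (-a / r) ≤ (2 * π * r) ^ p * ω * (ε' - δ) ^ n * exp (-a / r) := by
    calc c * exp (-a / r) = 1 * c * exp (-a / r) := by ring
      _ ≤ (2 * π * r) ^ p * c * exp (-a / r) := by
        gcongr
        exact one_le_rpow_of_pos_of_le_one_of_nonpos (by positivity) h2πr hp
      _ = (2 * π * r) ^ p * ω * (ε' - δ) ^ n * exp (-a / r) := by ring
  refine le_trans (ENNReal.ofReal_le_ofReal ?_) (hball x y r ⟨hr, hr1⟩)
  rw [show -(‖x - y‖ + ε' - δ) ^ 2 / (2 * r) = -a / r by ring,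
    show -δ ^ 2 / (r * K r) = -(δ ^ 2 / K r) / r by field_simp]
  linarith

lemma eventually_mul_exp_le_of_chapmanKolmogorov {E : Type*} [NormedAddCommGroup E]
    [MeasurableSpace E] [OpensMeasurableSpace E] {μ : Measure E} {q : ℝ → E → E → ℝ}
    {K : ℝ → ℝ} {C₁ C₂ C₃ ω p M η δ ε' : ℝ} {n : ℕ}
    (hq0 : ∀ s x y, 0 ≤ q s x y)
    (hCK : ∀ s t : ℝ, 0 < s → s < t → ∀ x y : E,
      ENNReal.ofReal (q t x y) = ∫⁻ z, ENNReal.ofReal (q (t - s) x z * q s z y) ∂μ)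
    (hlb : ∀ t : ℝ, 0 < t → ∀ x y : E,
      C₁ * exp (-C₂ * t) * t ^ p * exp (-C₃ * ‖x - y‖ ^ 2 / t) ≤ q t x y)
    (hKpos : ∀ r ∈ Ioc (0 : ℝ) 1, 0 < K r) (hKlim : Tendsto K (𝓝[>] 0) (𝓝 0))
    (hball : ∀ x y : E, ∀ r ∈ Ioc (0 : ℝ) 1,
      ENNReal.ofReal ((2 * π * r) ^ p * ω * (ε' - δ) ^ n *
          exp (-(‖x - y‖ + ε' - δ) ^ 2 / (2 * r)) - 2 * exp (-δ ^ 2 / (r * K r)))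
        ≤ ∫⁻ z in Metric.ball y ε', ENNReal.ofReal (q r x z) ∂μ)
    (hC₁ : 0 ≤ C₁) (hC₂ : 0 ≤ C₂) (hC₃ : 0 ≤ C₃) (hω : 0 < ω) (hp : p ≤ 0)
    (hη : 0 < η) (hη1 : η < 1) (hδ : 0 < δ) (hδε' : δ < ε') :
    ∀ᶠ t in 𝓝[>] 0, ∀ x y : E, ‖x - y‖ ≤ M →
      C₁ * exp (-C₂) * (ω * (ε' - δ) ^ n / 2) *
          exp (-(C₃ * ε' ^ 2 / η + (‖x - y‖ + ε' - δ) ^ 2 / (2 * (1 - η))) / t)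
        ≤ q t x y := by
  have hθ : 0 < 1 - η := sub_pos.2 hη1
  filter_upwards [eventually_nhdsGT_zero_mul_left hθ
      (eventually_ofReal_le_setLIntegral_ball (M := M) hKpos hKlim hball hω hp hδ hδε'),
    Ioo_mem_nhdsGT one_pos] with t hmass ⟨ht, ht1⟩ x y hxy
  have hηt : 0 < η * t := mul_pos hη ht
  have hgauss : ∀ z ∈ Metric.ball y ε',
      C₁ * exp (-C₂) * exp (-C₃ * ε' ^ 2 / (η * t)) ≤ q (η * t) z y := fun z hz =>
    (mul_exp_le_gaussian hC₁ hC₂ hC₃ hp hηt (by nlinarith) (norm_nonneg _)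
      (mem_ball_iff_norm.1 hz).le).trans (hlb _ hηt z y)
  have hsplit := hCK (η * t) t hηt (by nlinarith) x y
  rw [show t - η * t = (1 - η) * t by ring] at hsplit
  have key := ofReal_mul_le_lintegral_mul measurableSet_ball (fun z => hq0 _ _ _)
    (by positivity) hgauss (hmass x y hxy)
  rw [← hsplit, ENNReal.ofReal_le_ofReal_iff (hq0 _ _ _)] at key
  convert key using 1
  have hexp : exp (-(C₃ * ε' ^ 2 / η + (‖x - y‖ + ε' - δ) ^ 2 / (2 * (1 - η))) / t) =
      exp (-C₃ * ε' ^ 2 / (η * t)) * exp (-((‖x - y‖ + ε' - δ) ^ 2 / 2) / ((1 - η) * t)) := by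
    rw [← exp_add]
    congr 1
    field_simp
    ring
  rw [hexp]
  ring

lemma exists_split_params {C M ε : ℝ} (hC : 0 ≤ C) (hM : 0 ≤ M) (hε : 0 < ε) :
    ∃ η δ ε', 0 < η ∧ η < 1 ∧ 0 < δ ∧ δ < ε' ∧ ∀ ρ, 0 ≤ ρ → ρ ≤ M →
      C * ε' ^ 2 / η + (ρ + ε' - δ) ^ 2 / (2 * (1 - η)) ≤ ρ ^ 2 / 2 + ε := by
  set η := min (1 / 2) (ε / (4 * (M + 1) ^ 2))
  have hη : 0 < η := by positivity
  have hη2 : η ≤ 1 / 2 := min_le_left _ _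
  have hηM : (M + 1) ^ 2 * η ≤ ε / 4 := by
    have := min_le_right (1 / 2) (ε / (4 * (M + 1) ^ 2))
    rw [le_div_iff₀ (by positivity)] at this
    linarith
  set ε' := min 1 (min (ε / (2 * (2 * M + 1))) (ε * η / (4 * (C + 1))))
  have hε' : 0 < ε' := by positivity
  have hε'1 : ε' ≤ 1 := min_le_left _ _
  have hε'M : (2 * M + 1) * ε' ≤ ε / 2 := by
    have : ε' ≤ ε / (2 * (2 * M + 1)) := (min_le_right _ _).trans (min_le_left _ _)
    rw [le_div_iff₀ (by positivity)] at this
    linarith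
  have hε'C : C * ε' ^ 2 / η ≤ ε / 4 := by
    have : ε' ≤ ε * η / (4 * (C + 1)) := (min_le_right _ _).trans (min_le_right _ _)
    rw [le_div_iff₀ (by positivity)] at this
    rw [div_le_iff₀ hη]
    nlinarith [mul_le_mul_of_nonneg_left hε'1 hε'.le]
  refine ⟨η, ε' / 2, ε', hη, by linarith, by positivity, by linarith, fun ρ hρ hρM => ?_⟩
  rw [show ρ + ε' - ε' / 2 = ρ + ε' / 2 by ring]
  set X := ρ + ε' / 2 with hXdef
  have hX : 0 ≤ X := by positivity
  have hXM : X ≤ M + 1 := by linarith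
  have hXρ : X ^ 2 ≤ ρ ^ 2 + (2 * M + 1) * ε' := by nlinarith
  have hXη : X ^ 2 / (2 * (1 - η)) ≤ X ^ 2 / 2 + X ^ 2 * η := by
    rw [div_le_iff₀ (by linarith)]
    nlinarith [sq_nonneg X, mul_nonneg (sq_nonneg X) hη.le]
  have hXM2 : X ^ 2 * η ≤ (M + 1) ^ 2 * η := by gcongr
  linarith

theorem stmt17_general (d : ℕ)
    (q : ℝ → EuclideanSpace ℝ (Fin d) → EuclideanSpace ℝ (Fin d) → ℝ)
    (hq0 : ∀ s x y, 0 ≤ q s x y)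
    (hCK : ∀ s t : ℝ, 0 < s → s < t → ∀ x y : EuclideanSpace ℝ (Fin d),
      ENNReal.ofReal (q t x y) = ∫⁻ z, ENNReal.ofReal (q (t - s) x z * q s z y))
    (C₁ C₂ C₃ : ℝ) (h1 : 0 < C₁) (h2 : 0 < C₂) (h3 : 0 < C₃)
    (hlb : ∀ t : ℝ, 0 < t → ∀ x y : EuclideanSpace ℝ (Fin d),
      C₁ * Real.exp (-C₂ * t) * t ^ (-(d : ℝ) / 2) * Real.exp (-C₃ * ‖x - y‖ ^ 2 / t)
        ≤ q t x y)
    (K : ℝ → ℝ) (hKpos : ∀ r ∈ Set.Ioc (0 : ℝ) 1, 0 < K r)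
    (hKlim : Filter.Tendsto K (nhdsWithin 0 (Set.Ioi 0)) (nhds 0))
    (hball : ∀ x y : EuclideanSpace ℝ (Fin d), ∀ δ ε' : ℝ, 0 < δ → δ < ε' →
      ∀ r ∈ Set.Ioc (0 : ℝ) 1,
        ENNReal.ofReal
            ((2 * Real.pi * r) ^ (-(d : ℝ) / 2) *
                (volume (Metric.ball (0 : EuclideanSpace ℝ (Fin d)) 1)).toReal *
                (ε' - δ) ^ d * Real.exp (-(‖x - y‖ + ε' - δ) ^ 2 / (2 * r)) -
              2 * Real.exp (-δ ^ 2 / (r * K r)))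
          ≤ ∫⁻ z in Metric.ball y ε', ENNReal.ofReal (q r x z))
    (M : ℝ) (hM : 0 < M) :
    ∀ ε > (0 : ℝ), ∀ᶠ t in nhdsWithin (0 : ℝ) (Set.Ioi 0),
      ∀ x y : EuclideanSpace ℝ (Fin d), ‖x - y‖ ≤ M →
        -ε ≤ t * Real.log (q t x y) + ‖x - y‖ ^ 2 / 2 := by
  intro ε hε
  obtain ⟨η, δ, ε', hη, hη1, hδ, hδε', hsplit⟩ := exists_split_params h3.le hM.le (half_pos hε)
  have hω : 0 < (volume (Metric.ball (0 : EuclideanSpace ℝ (Fin d)) 1)).toReal :=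
    ENNReal.toReal_pos (Metric.measure_ball_pos volume _ one_pos).ne' measure_ball_lt_top.ne
  have hp : -(d : ℝ) / 2 ≤ 0 := by have := d.cast_nonneg (α := ℝ); linarith
  have hc : 0 < C₁ * exp (-C₂) *
      ((volume (Metric.ball (0 : EuclideanSpace ℝ (Fin d)) 1)).toReal * (ε' - δ) ^ d / 2) := by
    have := sub_pos.2 hδε'
    positivity
  filter_upwards [eventually_mul_exp_le_of_chapmanKolmogorov (M := M) hq0 hCK hlb hKpos hKlim
      (fun x y r hr => hball x y δ ε' hδ hδε' r hr) h1.le h2.le h3.le hω hp hη hη1 hδ hδε',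
    eventually_neg_sub_le_mul_log hc (half_pos hε)] with t hq hlog x y hxy
  have := hlog _ _ (hq x y hxy)
  have := hsplit ‖x - y‖ (norm_nonneg _) hxy
  linarith

theorem stmt17 (d : ℕ) (hd : 1 ≤ d)
    (q : ℝ → EuclideanSpace ℝ (Fin d) → EuclideanSpace ℝ (Fin d) → ℝ)
    (hqm : Measurable fun p : ℝ × EuclideanSpace ℝ (Fin d) × EuclideanSpace ℝ (Fin d) =>
      q p.1 p.2.1 p.2.2)
    (hq0 : ∀ s x y, 0 ≤ q s x y)
    (hCK : ∀ s t : ℝ, 0 < s → s < t → ∀ x y : EuclideanSpace ℝ (Fin d),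
      ENNReal.ofReal (q t x y) = ∫⁻ z, ENNReal.ofReal (q (t - s) x z * q s z y))
    (C₁ C₂ C₃ : ℝ) (h1 : 0 < C₁) (h2 : 0 < C₂) (h3 : 0 < C₃)
    (hlb : ∀ t : ℝ, 0 < t → ∀ x y : EuclideanSpace ℝ (Fin d),
      C₁ * Real.exp (-C₂ * t) * t ^ (-(d : ℝ) / 2) * Real.exp (-C₃ * ‖x - y‖ ^ 2 / t)
        ≤ q t x y)
    (K : ℝ → ℝ) (hKpos : ∀ r ∈ Set.Ioc (0 : ℝ) 1, 0 < K r)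
    (hKlim : Filter.Tendsto K (nhdsWithin 0 (Set.Ioi 0)) (nhds 0))
    (hball : ∀ x y : EuclideanSpace ℝ (Fin d), ∀ δ ε' : ℝ, 0 < δ → δ < ε' →
      ∀ r ∈ Set.Ioc (0 : ℝ) 1,
        ENNReal.ofReal
            ((2 * Real.pi * r) ^ (-(d : ℝ) / 2) *
                (volume (Metric.ball (0 : EuclideanSpace ℝ (Fin d)) 1)).toReal *
                (ε' - δ) ^ d * Real.exp (-(‖x - y‖ + ε' - δ) ^ 2 / (2 * r)) -
              2 * Real.exp (-δ ^ 2 / (r * K r)))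
          ≤ ∫⁻ z in Metric.ball y ε', ENNReal.ofReal (q r x z))
    (M : ℝ) (hM : 0 < M) :
    ∀ ε > (0 : ℝ), ∀ᶠ t in nhdsWithin (0 : ℝ) (Set.Ioi 0),
      ∀ x y : EuclideanSpace ℝ (Fin d), ‖x - y‖ ≤ M →
        -ε ≤ t * Real.log (q t x y) + ‖x - y‖ ^ 2 / 2 :=
  stmt17_general d q hq0 hCK C₁ C₂ C₃ h1 h2 h3 hlb K hKpos hKlim hball M hM
end
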